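/- Let H be a complex Hilbert space and let 𝒜 = [[A, B],[B*, D]] be a block operator matrix on H × H satisfying the basic assumptions with C = B*. Suppose B is closed with nonempty resolvent set ρ(B) and D(𝒜) = D(B*) × D(B) (i.e., D(B*) ⊆ D(A) and D(B) ⊆ D(D)). Then the induced operator 𝒜 is self-adjoint if one of the following holds: (a) A is B*-bounded with relative bound 0; (b) D is B-bounded with relative bound 0. -/

import Mathlib

open LinearPMap
open scoped LinearPMap

namespace BlockOp

variable {E F G X₁ X₂ Y₁ Y₂ : Type*}
  [AddCommGroup E] [Module ℂ E] [AddCommGroup F] [Module ℂ F] [AddCommGroup G] [Module ℂ G]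
  [AddCommGroup X₁] [Module ℂ X₁] [AddCommGroup X₂] [Module ℂ X₂]
  [AddCommGroup Y₁] [Module ℂ Y₁] [AddCommGroup Y₂] [Module ℂ Y₂]

/-- The operator on `X₁ × X₂` induced by a block operator matrix `[[A, B], [C, D]]`. -/
noncomputable def blockOp (A : X₁ →ₗ.[ℂ] Y₁) (B : X₂ →ₗ.[ℂ] Y₁)
    (C : X₁ →ₗ.[ℂ] Y₂) (D : X₂ →ₗ.[ℂ] Y₂) : (X₁ × X₂) →ₗ.[ℂ] (Y₁ × Y₂) where
  domain := (A.domain ⊓ C.domain).prod (B.domain ⊓ D.domain)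
  toFun := LinearMap.prod
    (A.toFun ∘ₗ Submodule.inclusion inf_le_left ∘ₗ
        (LinearMap.fst ℂ X₁ X₂).restrict
          (p := (A.domain ⊓ C.domain).prod (B.domain ⊓ D.domain))
          (q := A.domain ⊓ C.domain) (fun _ hx => hx.1)
      + B.toFun ∘ₗ Submodule.inclusion inf_le_left ∘ₗ
        (LinearMap.snd ℂ X₁ X₂).restrict
          (p := (A.domain ⊓ C.domain).prod (B.domain ⊓ D.domain))
          (q := B.domain ⊓ D.domain) (fun _ hx => hx.2))
    (C.toFun ∘ₗ Submodule.inclusion inf_le_right ∘ₗ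
        (LinearMap.fst ℂ X₁ X₂).restrict
          (p := (A.domain ⊓ C.domain).prod (B.domain ⊓ D.domain))
          (q := A.domain ⊓ C.domain) (fun _ hx => hx.1)
      + D.toFun ∘ₗ Submodule.inclusion inf_le_right ∘ₗ
        (LinearMap.snd ℂ X₁ X₂).restrict
          (p := (A.domain ⊓ C.domain).prod (B.domain ⊓ D.domain))
          (q := B.domain ⊓ D.domain) (fun _ hx => hx.2))

/-- A linear operator on a product space has a matrix representation if it is induced
by some block operator matrix. -/
def HasMatrixRep (T : (X₁ × X₂) →ₗ.[ℂ] (Y₁ × Y₂)) : Prop :=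
  ∃ (A : X₁ →ₗ.[ℂ] Y₁) (B : X₂ →ₗ.[ℂ] Y₁) (C : X₁ →ₗ.[ℂ] Y₂) (D : X₂ →ₗ.[ℂ] Y₂),
    T = blockOp A B C D

/-- The composition of two partially defined operators, with its natural domain
`{x ∈ D(B) : B x ∈ D(A)}`. -/
noncomputable def pcomp (A : F →ₗ.[ℂ] G) (B : E →ₗ.[ℂ] F) : E →ₗ.[ℂ] G where
  domain :=
    { carrier := {x | ∃ hx : x ∈ B.domain, B ⟨x, hx⟩ ∈ A.domain}
      zero_mem' := ⟨B.domain.zero_mem, by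
        have : (⟨0, B.domain.zero_mem⟩ : B.domain) = 0 := rfl
        rw [this, LinearPMap.map_zero]; exact A.domain.zero_mem⟩
      add_mem' := by
        rintro a b ⟨ha, ha'⟩ ⟨hb, hb'⟩
        refine ⟨add_mem ha hb, ?_⟩
        have : (⟨a + b, add_mem ha hb⟩ : B.domain) = ⟨a, ha⟩ + ⟨b, hb⟩ := rfl
        rw [this, LinearPMap.map_add]
        exact add_mem ha' hb'
      smul_mem' := by
        rintro c a ⟨ha, ha'⟩
        refine ⟨Submodule.smul_mem _ c ha, ?_⟩
        have : (⟨c • a, Submodule.smul_mem _ c ha⟩ : B.domain) = c • (⟨a, ha⟩ : B.domain) := rfl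
        rw [this, LinearPMap.map_smul]
        exact Submodule.smul_mem _ c ha' }
  toFun := A.toFun ∘ₗ LinearMap.codRestrict A.domain
      (B.toFun ∘ₗ
        { toFun := fun x => (⟨(x : E), x.2.choose⟩ : B.domain)
          map_add' := fun x y => Subtype.ext rfl
          map_smul' := fun c x => Subtype.ext rfl })
      (fun x => x.2.choose_spec)

end BlockOp

namespace BlockOp

section Transport

variable {E F G E' F' : Type*}
  [AddCommGroup E] [Module ℂ E] [AddCommGroup F] [Module ℂ F] [AddCommGroup G] [Module ℂ G]
  [AddCommGroup E'] [Module ℂ E'] [AddCommGroup F'] [Module ℂ F']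

/-- Transport a partially defined linear map along linear equivalences. -/
noncomputable def pmapCongr (e : E ≃ₗ[ℂ] E') (T : E' →ₗ.[ℂ] F') (e' : F' ≃ₗ[ℂ] F) :
    E →ₗ.[ℂ] F where
  domain := T.domain.comap (e : E →ₗ[ℂ] E')
  toFun := (e' : F' →ₗ[ℂ] F) ∘ₗ T.toFun ∘ₗ
    ((e : E →ₗ[ℂ] E').restrict (p := T.domain.comap (e : E →ₗ[ℂ] E')) (q := T.domain)
      (fun _ hx => hx))

end Transport

section Corners

variable {X₁ X₂ Y₁ Y₂ : Type*}
  [AddCommGroup X₁] [Module ℂ X₁] [AddCommGroup X₂] [Module ℂ X₂]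
  [AddCommGroup Y₁] [Module ℂ Y₁] [AddCommGroup Y₂] [Module ℂ Y₂]

/-- The upper-left corner `P₁ 𝒜 J₁` of an operator on a product space, with domain
`{x₁ : (x₁, 0) ∈ D(𝒜)}`. -/
noncomputable def corner₁₁ (T : (X₁ × X₂) →ₗ.[ℂ] (Y₁ × Y₂)) : X₁ →ₗ.[ℂ] Y₁ where
  domain := T.domain.comap (LinearMap.inl ℂ X₁ X₂)
  toFun := LinearMap.fst ℂ Y₁ Y₂ ∘ₗ T.toFun ∘ₗ
    ((LinearMap.inl ℂ X₁ X₂).restrict (p := T.domain.comap (LinearMap.inl ℂ X₁ X₂))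
      (q := T.domain) (fun _ hx => hx))

/-- The lower-left corner `P₂ 𝒜 J₁`. -/
noncomputable def corner₂₁ (T : (X₁ × X₂) →ₗ.[ℂ] (Y₁ × Y₂)) : X₁ →ₗ.[ℂ] Y₂ where
  domain := T.domain.comap (LinearMap.inl ℂ X₁ X₂)
  toFun := LinearMap.snd ℂ Y₁ Y₂ ∘ₗ T.toFun ∘ₗ
    ((LinearMap.inl ℂ X₁ X₂).restrict (p := T.domain.comap (LinearMap.inl ℂ X₁ X₂))
      (q := T.domain) (fun _ hx => hx))

/-- The upper-right corner `P₁ 𝒜 J₂`. -/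
noncomputable def corner₁₂ (T : (X₁ × X₂) →ₗ.[ℂ] (Y₁ × Y₂)) : X₂ →ₗ.[ℂ] Y₁ where
  domain := T.domain.comap (LinearMap.inr ℂ X₁ X₂)
  toFun := LinearMap.fst ℂ Y₁ Y₂ ∘ₗ T.toFun ∘ₗ
    ((LinearMap.inr ℂ X₁ X₂).restrict (p := T.domain.comap (LinearMap.inr ℂ X₁ X₂))
      (q := T.domain) (fun _ hx => hx))

/-- The lower-right corner `P₂ 𝒜 J₂`. -/
noncomputable def corner₂₂ (T : (X₁ × X₂) →ₗ.[ℂ] (Y₁ × Y₂)) : X₂ →ₗ.[ℂ] Y₂ where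
  domain := T.domain.comap (LinearMap.inr ℂ X₁ X₂)
  toFun := LinearMap.snd ℂ Y₁ Y₂ ∘ₗ T.toFun ∘ₗ
    ((LinearMap.inr ℂ X₁ X₂).restrict (p := T.domain.comap (LinearMap.inr ℂ X₁ X₂))
      (q := T.domain) (fun _ hx => hx))

end Corners

section Shift

variable {E : Type*} [AddCommGroup E] [Module ℂ E]

/-- `T - λ`, i.e. `T - λ·I`, with domain `D(T)`. -/
noncomputable def shift (T : E →ₗ.[ℂ] E) (lam : ℂ) : E →ₗ.[ℂ] E :=
  T - (lam • (LinearMap.id : E →ₗ[ℂ] E)).toPMap ⊤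

/-- The identity as a partially defined operator with full domain. -/
noncomputable def idP (E : Type*) [AddCommGroup E] [Module ℂ E] : E →ₗ.[ℂ] E :=
  (LinearMap.id : E →ₗ[ℂ] E).toPMap ⊤

end Shift

section Resolvent

variable {E : Type*} [NormedAddCommGroup E] [NormedSpace ℂ E]

/-- `R` is the (bounded, everywhere defined) inverse of `T - λ`;
this witnesses that `λ` belongs to the resolvent set of `T`. -/
structure IsResolventAt (T : E →ₗ.[ℂ] E) (lam : ℂ) (R : E →L[ℂ] E) : Prop where
  mem : ∀ y, R y ∈ T.domain
  right_inv : ∀ y, T ⟨R y, mem y⟩ - lam • (R y) = y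
  left_inv : ∀ x : T.domain, R (T x - lam • (x : E)) = x

/-- The resolvent set of `T`: those `λ ∈ ℂ` for which `T - λ` is a bijection from `D(T)`
onto the whole space with bounded inverse. -/
def resolventSet (T : E →ₗ.[ℂ] E) : Set ℂ :=
  {lam | ∃ R : E →L[ℂ] E, IsResolventAt T lam R}

end Resolvent

section RelativeBound

variable {E F G : Type*} [NormedAddCommGroup E] [NormedSpace ℂ E]
  [NormedAddCommGroup F] [NormedSpace ℂ F] [NormedAddCommGroup G] [NormedSpace ℂ G]

/-- `S` is `T`-bounded with constants `a`, `b`: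
`D(T) ⊆ D(S)` and `‖S x‖ ≤ a ‖x‖ + b ‖T x‖` on `D(T)`. -/
structure RelBound (S : E →ₗ.[ℂ] G) (T : E →ₗ.[ℂ] F) (a b : ℝ) : Prop where
  dom_le : T.domain ≤ S.domain
  bound : ∀ x : T.domain, ‖S ⟨(x : E), dom_le x.2⟩‖ ≤ a * ‖(x : E)‖ + b * ‖T x‖

/-- `S` is `T`-bounded with relative bound `< c`. -/
def IsRelBoundedLt (S : E →ₗ.[ℂ] G) (T : E →ₗ.[ℂ] F) (c : ℝ) : Prop :=
  ∃ b, 0 ≤ b ∧ b < c ∧ ∃ a, 0 ≤ a ∧ RelBound S T a b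

/-- `S` is `T`-bounded with relative bound `≤ c` (for `c = 0`: relative bound `0`). -/
def IsRelBoundedLe (S : E →ₗ.[ℂ] G) (T : E →ₗ.[ℂ] F) (c : ℝ) : Prop :=
  ∀ b, c < b → ∃ a, 0 ≤ a ∧ RelBound S T a b

end RelativeBound

section HilbertProduct

variable {H₁ H₂ K₁ K₂ : Type*}
  [NormedAddCommGroup H₁] [InnerProductSpace ℂ H₁]
  [NormedAddCommGroup H₂] [InnerProductSpace ℂ H₂]
  [NormedAddCommGroup K₁] [InnerProductSpace ℂ K₁]
  [NormedAddCommGroup K₂] [InnerProductSpace ℂ K₂]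

/-- The operator induced by a block operator matrix on the Hilbert space
`H₁ ×_{ℓ²} H₂`, i.e. `WithLp 2 (H₁ × H₂)`. -/
noncomputable def blockOpL (A : H₁ →ₗ.[ℂ] K₁) (B : H₂ →ₗ.[ℂ] K₁)
    (C : H₁ →ₗ.[ℂ] K₂) (D : H₂ →ₗ.[ℂ] K₂) :
    WithLp 2 (H₁ × H₂) →ₗ.[ℂ] WithLp 2 (K₁ × K₂) :=
  pmapCongr (WithLp.linearEquiv 2 ℂ (H₁ × H₂)) (blockOp A B C D)
    (WithLp.linearEquiv 2 ℂ (K₁ × K₂)).symm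

/-- A linear operator on `H₁ ×_{ℓ²} H₂` has a matrix representation if it is induced by
some block operator matrix. -/
def HasMatrixRepL (T : WithLp 2 (H₁ × H₂) →ₗ.[ℂ] WithLp 2 (K₁ × K₂)) : Prop :=
  ∃ (A : H₁ →ₗ.[ℂ] K₁) (B : H₂ →ₗ.[ℂ] K₁) (C : H₁ →ₗ.[ℂ] K₂) (D : H₂ →ₗ.[ℂ] K₂),
    T = blockOpL A B C D

end HilbertProduct

section EssSelfAdjoint

variable {E : Type*} [NormedAddCommGroup E] [InnerProductSpace ℂ E] [CompleteSpace E]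

/-- An operator is essentially self-adjoint if it is closable and its closure is
self-adjoint. -/
def IsEssentiallySelfAdjoint (T : E →ₗ.[ℂ] E) : Prop :=
  T.IsClosable ∧ IsSelfAdjoint T.closure

end EssSelfAdjoint

end BlockOp

/-!
Put `𝒜₀ := [[0, B], [B*, D]]` in case (a) and `𝒜₀ := [[A, B], [B*, 0]]` in case (b).
For `λ ∈ ρ(B)`, the operator `𝒜₀ - V` with the bounded self-adjoint `V (x₁, x₂) = (λ x₂, λ̄ x₁)`
is block triangular with the bijective off-diagonal entries `B - λ` and `B* - λ̄`, hence
surjective; since `𝒜₀` is symmetric, this makes it self-adjoint. By the closed graph theorem the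
diagonal entry kept in `𝒜₀` is relatively bounded with respect to `B` resp. `B*`, so an entry of
relative bound `0` turns `𝒜 - 𝒜₀` into an `𝒜₀`-bounded perturbation with relative bound `1/2`,
and the Kato–Rellich theorem applies.
-/

open scoped InnerProductSpace ComplexConjugate

namespace LinearPMap

open Complex

section Shift

variable {E : Type*} [AddCommGroup E] [Module ℂ E]

def shiftedToFun (T : E →ₗ.[ℂ] E) (c : ℂ) : T.domain →ₗ[ℂ] E :=
  T.toFun - c • T.domain.subtype

@[simp]
theorem shiftedToFun_apply (T : E →ₗ.[ℂ] E) (c : ℂ) (x : T.domain) :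
    T.shiftedToFun c x = T x - c • (x : E) := rfl

end Shift

variable {E : Type*} [NormedAddCommGroup E] [InnerProductSpace ℂ E] {T : E →ₗ.[ℂ] E}

theorem IsFormalAdjoint.norm_sub_I_mul_smul_sq (hT : T.IsFormalAdjoint T) (μ : ℝ)
    (x : T.domain) :
    ‖T x - (I * μ) • (x : E)‖ ^ 2 = ‖T x‖ ^ 2 + μ ^ 2 * ‖(x : E)‖ ^ 2 := by
  have hreal : (⟪T x, (x : E)⟫_ℂ).im = 0 := by
    rw [← conj_eq_iff_im, inner_conj_symm]
    exact (hT x x).symm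
  have hcross : RCLike.re ⟪T x, (I * μ) • (x : E)⟫_ℂ = 0 := by
    simp [hreal]
  rw [@norm_sub_sq ℂ, hcross, norm_smul, mul_pow]
  simp

theorem IsFormalAdjoint.norm_le_norm_sub_I_mul_smul (hT : T.IsFormalAdjoint T) (μ : ℝ)
    (x : T.domain) : ‖T x‖ ≤ ‖T x - (I * μ) • (x : E)‖ := by
  refine (sq_le_sq₀ (norm_nonneg _) (norm_nonneg _)).mp ?_
  rw [hT.norm_sub_I_mul_smul_sq]
  exact le_add_of_nonneg_right (by positivity)

theorem IsFormalAdjoint.abs_mul_norm_le_norm_sub_I_mul_smul (hT : T.IsFormalAdjoint T) (μ : ℝ)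
    (x : T.domain) : |μ| * ‖(x : E)‖ ≤ ‖T x - (I * μ) • (x : E)‖ := by
  refine (sq_le_sq₀ (by positivity) (norm_nonneg _)).mp ?_
  rw [hT.norm_sub_I_mul_smul_sq, mul_pow, sq_abs]
  nlinarith [sq_nonneg ‖T x‖]

theorem IsFormalAdjoint.injective_shiftedToFun (hT : T.IsFormalAdjoint T) {μ : ℝ}
    (hμ : μ ≠ 0) : Function.Injective (T.shiftedToFun (I * μ)) := by
  refine (injective_iff_map_eq_zero _).mpr fun x hx => ?_
  have h := hT.abs_mul_norm_le_norm_sub_I_mul_smul μ x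
  rw [← shiftedToFun_apply, hx, norm_zero] at h
  exact Subtype.ext (norm_le_zero_iff.mp (nonpos_of_mul_nonpos_right h (abs_pos.mpr hμ)))

variable [CompleteSpace E]

theorem isFormalAdjoint_self_of_le_adjoint (hT : Dense (T.domain : Set E)) (h : T ≤ T†) :
    T.IsFormalAdjoint T := fun x y => by
  rw [(adjoint_isFormalAdjoint hT).symm x ⟨y, h.1 y.2⟩, h.2 (y := ⟨y, h.1 y.2⟩) rfl]

theorem dense_domain_of_surjective_sub (hsym : T.IsFormalAdjoint T) (V : E →L[ℂ] E)
    (hV : ∀ y, ∃ x : T.domain, T x - V x = y)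
    (hV' : ∀ y, ∃ x : T.domain, T x - ContinuousLinearMap.adjoint V x = y) :
    Dense (T.domain : Set E) := by
  rw [Submodule.dense_iff_topologicalClosure_eq_top, Submodule.topologicalClosure_eq_top_iff,
    Submodule.eq_bot_iff]
  intro v hv
  obtain ⟨u, rfl⟩ := hV' v
  have hperp : ∀ x : T.domain, ⟪(u : E), T x - V x⟫_ℂ = 0 := fun x => by
    rw [← (Submodule.mem_orthogonal' _ _).mp hv x x.2, inner_sub_left, inner_sub_right,
      hsym u x, ContinuousLinearMap.adjoint_inner_left]
  obtain ⟨x, hx⟩ := hV u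
  have hu : u = 0 := by
    have := hperp x
    rwa [hx, inner_self_eq_zero, ZeroMemClass.coe_eq_zero] at this
  simp [hu]

theorem adjoint_eq_self_of_surjective_sub (hsym : T.IsFormalAdjoint T) (V : E →L[ℂ] E)
    (hV : ∀ y, ∃ x : T.domain, T x - V x = y)
    (hV' : ∀ y, ∃ x : T.domain, T x - ContinuousLinearMap.adjoint V x = y) : T† = T := by
  have hT := dense_domain_of_surjective_sub hsym V hV hV'
  have hdom : ∀ y : T†.domain, ∃ x : T.domain, (x : E) = y ∧ T x = T† y := by
    intro y
    obtain ⟨x, hx⟩ := hV (T† y - V y)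
    have hperp : ∀ u : T.domain,
        ⟪T u - ContinuousLinearMap.adjoint V u, (y : E) - x⟫_ℂ = 0 := fun u =>
      calc _ = ⟪(u : E), (T† y - V y) - (T x - V x)⟫_ℂ := by
            simp only [inner_sub_left, inner_sub_right, ContinuousLinearMap.adjoint_inner_left,
              (adjoint_isFormalAdjoint hT).symm u y, hsym u x]
        _ = 0 := by rw [hx, sub_self, inner_zero_right]
    obtain ⟨u, hu⟩ := hV' ((y : E) - x)
    have hxy : (x : E) = y := by
      have := hperp u
      rw [hu, inner_self_eq_zero, sub_eq_zero] at this
      exact this.symm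
    refine ⟨x, hxy, ?_⟩
    rwa [hxy, sub_left_inj] at hx
  refine le_antisymm (le_of_le_graph fun p hp => ?_) (hsym.le_adjoint hT)
  obtain ⟨y, hy, hTy⟩ := (mem_graph_iff _).mp hp
  obtain ⟨x, hxy, hTx⟩ := hdom y
  exact (mem_graph_iff _).mpr ⟨x, hxy.trans hy, hTx.trans hTy⟩

theorem isClosed_range_shiftedToFun (hT : T.IsClosed) (hsym : T.IsFormalAdjoint T) {μ : ℝ}
    (hμ : μ ≠ 0) : _root_.IsClosed (LinearMap.range (T.shiftedToFun (I * μ)) : Set E) := by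
  have : CompleteSpace T.graph := hT.completeSpace_coe
  let Φ : T.graph →L[ℂ] E :=
    (ContinuousLinearMap.snd ℂ E E - (I * μ) • ContinuousLinearMap.fst ℂ E E).comp
      T.graph.subtypeL
  have hΦ : ∀ x : T.domain, Φ ⟨((x : E), T x), T.mem_graph x⟩ = T.shiftedToFun (I * μ) x :=
    fun x => rfl
  have hrange : (LinearMap.range (T.shiftedToFun (I * μ)) : Set E) = Set.range Φ := by
    ext y
    constructor
    · rintro ⟨x, rfl⟩
      exact ⟨_, hΦ x⟩
    · rintro ⟨p, rfl⟩
      obtain ⟨x, hx₁, hx₂⟩ := (mem_graph_iff T).mp p.2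
      exact ⟨x, by rw [← hΦ x]; congr⟩
  have hbound : ∀ p, ‖p‖ ≤ (⟨|μ|⁻¹ + 1, by positivity⟩ : NNReal) * ‖Φ p‖ := by
    rintro ⟨⟨p₁, p₂⟩, hp⟩
    obtain ⟨x, rfl, rfl⟩ := (mem_graph_iff T).mp hp
    have h₁ := hsym.abs_mul_norm_le_norm_sub_I_mul_smul μ x
    have h₂ := hsym.norm_le_norm_sub_I_mul_smul μ x
    rw [hΦ x, shiftedToFun_apply]
    calc ‖(⟨((x : E), T x), hp⟩ : T.graph)‖ = max ‖(x : E)‖ ‖T x‖ := rfl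
      _ ≤ ‖(x : E)‖ + ‖T x‖ := max_le_add_of_nonneg (norm_nonneg _) (norm_nonneg _)
      _ ≤ (|μ|⁻¹ + 1) * ‖T x - (I * μ) • (x : E)‖ := by
        rw [add_mul, one_mul]
        exact add_le_add ((le_inv_mul_iff₀ (abs_pos.mpr hμ)).mpr h₁) h₂
  rw [hrange]
  exact (Φ.antilipschitz_of_bound hbound).isClosed_range Φ.uniformContinuous

theorem orthogonal_range_shiftedToFun_eq_bot (hT : T† = T) {μ : ℝ} (hμ : μ ≠ 0) :
    (LinearMap.range (T.shiftedToFun (I * μ)))ᗮ = ⊥ := by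
  have hTd : Dense (T.domain : Set E) := IsSelfAdjoint.dense_domain hT
  have hsym := isFormalAdjoint_self_of_le_adjoint hTd hT.ge
  refine (Submodule.eq_bot_iff _).mpr fun v hv => ?_
  have hw : ∀ x : T.domain, ⟪(I * (-μ : ℝ)) • v, (x : E)⟫_ℂ = ⟪v, T x⟫_ℂ := by
    intro x
    have hx := (Submodule.mem_orthogonal' _ _).mp hv _ ⟨x, rfl⟩
    rw [shiftedToFun_apply, inner_sub_right, sub_eq_zero, inner_smul_right] at hx
    rw [hx, inner_smul_left, map_mul, conj_I, conj_ofReal]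
    push_cast
    ring
  have hmem : v ∈ T†.domain := mem_adjoint_domain_of_exists _ ⟨_, hw⟩
  have hTv : T.shiftedToFun (I * (-μ : ℝ)) ⟨v, hT.le.1 hmem⟩ = 0 := by
    rw [shiftedToFun_apply, ← hT.le.2 (x := ⟨v, hmem⟩) rfl, adjoint_apply_eq hTd _ hw,
      sub_self]
  have h0 := hsym.injective_shiftedToFun (neg_ne_zero.mpr hμ)
    (hTv.trans (_root_.map_zero (T.shiftedToFun _)).symm)
  exact congrArg Subtype.val h0

theorem surjective_shiftedToFun_of_adjoint_eq_self (hT : T† = T) {μ : ℝ} (hμ : μ ≠ 0) :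
    Function.Surjective (T.shiftedToFun (I * μ)) := by
  have hsym := isFormalAdjoint_self_of_le_adjoint (IsSelfAdjoint.dense_domain hT) hT.ge
  have hclosed := isClosed_range_shiftedToFun (IsSelfAdjoint.isClosed hT) hsym hμ
  have : CompleteSpace (LinearMap.range (T.shiftedToFun (I * μ))) := hclosed.completeSpace_coe
  rw [← LinearMap.range_eq_top, ← Submodule.orthogonal_eq_bot_iff]
  exact orthogonal_range_shiftedToFun_eq_bot hT hμ

theorem surjective_shiftedToFun_of_relBound {S : E →ₗ.[ℂ] E} (hT : T† = T)
    (hdom : S.domain = T.domain) {a b : ℝ} (ha : 0 ≤ a) (hb : 0 ≤ b)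
    (hST : BlockOp.RelBound (S - T) T a b) {μ : ℝ} (hμ : μ ≠ 0) (hab : a / |μ| + b < 1) :
    Function.Surjective (S.shiftedToFun (I * μ)) := by
  have hsym := isFormalAdjoint_self_of_le_adjoint (IsSelfAdjoint.dense_domain hT) hT.ge
  let e := LinearEquiv.ofBijective _
    ⟨hsym.injective_shiftedToFun hμ, surjective_shiftedToFun_of_adjoint_eq_self hT hμ⟩
  -- `(S - iμ) (T - iμ)⁻¹ = 1 + K` with `‖K‖ < 1`
  let K : E →ₗ[ℂ] E :=
    (S - T).toFun ∘ₗ Submodule.inclusion hST.dom_le ∘ₗ e.symm.toLinearMap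
  have hK : ∀ y, ‖K y‖ ≤ (a / |μ| + b) * ‖y‖ := fun y => by
    have hy : T.shiftedToFun (I * μ) (e.symm y) = y := e.apply_symm_apply y
    have h₁ := hsym.abs_mul_norm_le_norm_sub_I_mul_smul μ (e.symm y)
    have h₂ := hsym.norm_le_norm_sub_I_mul_smul μ (e.symm y)
    rw [← shiftedToFun_apply, hy] at h₁ h₂
    calc ‖K y‖ ≤ a * ‖(e.symm y : E)‖ + b * ‖T (e.symm y)‖ := hST.bound _
      _ ≤ a * (‖y‖ / |μ|) + b * ‖y‖ := by
        gcongr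
        rwa [le_div_iff₀' (abs_pos.mpr hμ)]
      _ = (a / |μ| + b) * ‖y‖ := by ring
  let Kc := K.mkContinuous _ hK
  have hKc : ‖-Kc‖ < 1 := (norm_neg Kc).symm ▸
    (K.mkContinuous_norm_le (by positivity) hK).trans_lt hab
  intro y
  let u := Units.oneSub (-Kc) hKc
  let z := ((u⁻¹ : (E →L[ℂ] E)ˣ) : E →L[ℂ] E) y
  refine ⟨⟨e.symm z, hdom.symm.le (e.symm z).2⟩, ?_⟩
  calc S.shiftedToFun (I * μ) _ = T.shiftedToFun (I * μ) (e.symm z) + K z := by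
        have hKz : K z = S ⟨e.symm z, hdom.symm.le (e.symm z).2⟩ - T (e.symm z) := rfl
        rw [hKz, shiftedToFun_apply, shiftedToFun_apply]
        abel
    _ = (u : E →L[ℂ] E) z := by
        rw [show T.shiftedToFun (I * μ) (e.symm z) = z from e.apply_symm_apply z]
        simp [u, Units.oneSub, Kc]
    _ = y := congrArg (fun f : E →L[ℂ] E => f y) u.mul_inv

theorem adjoint_eq_self_of_relBound {S : E →ₗ.[ℂ] E} (hT : T† = T)
    (hS : S.IsFormalAdjoint S) (hdom : S.domain = T.domain) {a b : ℝ} (ha : 0 ≤ a)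
    (hb : 0 ≤ b) (hb1 : b < 1) (hST : BlockOp.RelBound (S - T) T a b) : S† = S := by
  set μ := (a + 1) / (1 - b)
  have hμ : 0 < μ := div_pos (by linarith) (by linarith)
  have hab : a / μ + b < 1 := by
    rw [div_div_eq_mul_div, div_add' _ _ _ (by linarith), div_lt_one (by linarith)]
    nlinarith
  have hsurj : ∀ μ' : ℝ, |μ'| = μ → ∀ y, ∃ x : S.domain,
      S x - ((I * μ') • (1 : E →L[ℂ] E)) x = y := fun μ' hμ' =>
    surjective_shiftedToFun_of_relBound hT hdom ha hb hST (abs_pos.mp (hμ' ▸ hμ))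
      (hμ' ▸ hab)
  refine adjoint_eq_self_of_surjective_sub hS ((I * μ) • 1) (hsurj μ (abs_of_pos hμ)) ?_
  simpa [← ContinuousLinearMap.star_eq_adjoint, star_smul] using
    hsurj (-μ) (by rw [abs_neg, abs_of_pos hμ])

end LinearPMap

namespace BlockOp

open Complex LinearPMap

theorem exists_relBound_of_isClosed {E F G : Type*}
    [NormedAddCommGroup E] [NormedSpace ℂ E] [CompleteSpace E]
    [NormedAddCommGroup F] [NormedSpace ℂ F] [CompleteSpace F]
    [NormedAddCommGroup G] [NormedSpace ℂ G] [CompleteSpace G]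
    {B : E →ₗ.[ℂ] F} {S : E →ₗ.[ℂ] G} (hB : B.IsClosed) (hS : S.IsClosable)
    (hdom : B.domain ≤ S.domain) : ∃ C, 0 ≤ C ∧ RelBound S B C C := by
  have : CompleteSpace B.graph := hB.completeSpace_coe
  let π : B.graph →ₗ[ℂ] S.domain :=
    LinearMap.codRestrict S.domain ((LinearMap.fst ℂ E F).comp B.graph.subtype)
      fun p => hdom (mem_domain_of_mem_graph (y := (p : E × F).2) p.2)
  let L : B.graph →ₗ[ℂ] G := S.toFun ∘ₗ π
  have hL : Continuous L := L.continuous_of_seq_closed_graph fun u p w hu hw => by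
    have hfst : Filter.Tendsto (fun n => (u n : E × F).1) Filter.atTop (nhds (p : E × F).1) :=
      ((continuous_fst.comp continuous_subtype_val).tendsto p).comp hu
    have hlim : ((p : E × F).1, w) ∈ S.closure.graph := by
      rw [← hS.graph_closure_eq_closure_graph]
      exact mem_closure_of_tendsto (hfst.prodMk_nhds hw)
        (Filter.Eventually.of_forall fun n => S.mem_graph (π (u n)))
    exact S.closure.mem_graph_snd_inj hlim (le_graph_of_le (le_closure S) (S.mem_graph (π p))) rfl
  let Lc : B.graph →L[ℂ] G := ⟨L, hL⟩
  refine ⟨‖Lc‖, Lc.opNorm_nonneg, hdom, fun x => ?_⟩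
  calc ‖S ⟨x, hdom x.2⟩‖ = ‖Lc ⟨((x : E), B x), B.mem_graph x⟩‖ := rfl
    _ ≤ ‖Lc‖ * max ‖(x : E)‖ ‖B x‖ := Lc.le_opNorm _
    _ ≤ ‖Lc‖ * (‖(x : E)‖ + ‖B x‖) := by
        gcongr
        exact max_le_add_of_nonneg (norm_nonneg _) (norm_nonneg _)
    _ = _ := mul_add _ _ _

theorem withLp_prod_ext {α β : Type*} {x y : WithLp 2 (α × β)} (h₁ : x.fst = y.fst)
    (h₂ : x.snd = y.snd) : x = y :=
  WithLp.ofLp_injective 2 (Prod.ext h₁ h₂)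

section Entries

variable {H₁ H₂ K₁ K₂ : Type*}
  [NormedAddCommGroup H₁] [InnerProductSpace ℂ H₁]
  [NormedAddCommGroup H₂] [InnerProductSpace ℂ H₂]
  [NormedAddCommGroup K₁] [InnerProductSpace ℂ K₁]
  [NormedAddCommGroup K₂] [InnerProductSpace ℂ K₂]
  {A : H₁ →ₗ.[ℂ] K₁} {B : H₂ →ₗ.[ℂ] K₁} {C : H₁ →ₗ.[ℂ] K₂} {D : H₂ →ₗ.[ℂ] K₂}

theorem mem_blockOpL_domain {x : WithLp 2 (H₁ × H₂)} :
    x ∈ (blockOpL A B C D).domain ↔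
      (x.fst ∈ A.domain ∧ x.fst ∈ C.domain) ∧ (x.snd ∈ B.domain ∧ x.snd ∈ D.domain) :=
  Iff.rfl

@[simp]
theorem blockOpL_apply_fst (x : (blockOpL A B C D).domain) :
    (blockOpL A B C D x).fst = A ⟨x.1.fst, x.2.1.1⟩ + B ⟨x.1.snd, x.2.2.1⟩ := rfl

@[simp]
theorem blockOpL_apply_snd (x : (blockOpL A B C D).domain) :
    (blockOpL A B C D x).snd = C ⟨x.1.fst, x.2.1.2⟩ + D ⟨x.1.snd, x.2.2.2⟩ := rfl

end Entries

section Normed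

variable {X : Type*} [NormedAddCommGroup X] [NormedSpace ℂ X]

def offDiag (lam : ℂ) : WithLp 2 (X × X) →L[ℂ] WithLp 2 (X × X) :=
  (WithLp.prodContinuousLinearEquiv 2 ℂ X X).symm.toContinuousLinearMap ∘L
    (lam • WithLp.sndL 2 ℂ X X).prod (conj lam • WithLp.fstL 2 ℂ X X)

@[simp]
theorem offDiag_apply_fst (lam : ℂ) (x : WithLp 2 (X × X)) :
    (offDiag lam x).fst = lam • x.snd := rfl

@[simp]
theorem offDiag_apply_snd (lam : ℂ) (x : WithLp 2 (X × X)) :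
    (offDiag lam x).snd = conj lam • x.fst := rfl

theorem IsResolventAt.surjective_shiftedToFun {B : X →ₗ.[ℂ] X} {lam : ℂ} {R : X →L[ℂ] X}
    (hR : IsResolventAt B lam R) : Function.Surjective (B.shiftedToFun lam) :=
  fun y => ⟨⟨R y, hR.mem y⟩, hR.right_inv y⟩

end Normed

variable {H : Type*} [NormedAddCommGroup H] [InnerProductSpace ℂ H] [CompleteSpace H]

theorem adjoint_offDiag (lam : ℂ) :
    ContinuousLinearMap.adjoint (offDiag (X := H) lam) = offDiag lam := by
  refine ((ContinuousLinearMap.eq_adjoint_iff _ _).mpr fun x y => ?_).symm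
  simp [inner_smul_left, inner_smul_right]
  ring

theorem IsResolventAt.surjective_adjoint_shiftedToFun {B : H →ₗ.[ℂ] H} {lam : ℂ}
    {R : H →L[ℂ] H} (hB : Dense (B.domain : Set H)) (hR : IsResolventAt B lam R) :
    Function.Surjective (B†.shiftedToFun (conj lam)) := by
  intro z
  have hR' : ∀ u : B.domain, ⟪z + conj lam • ContinuousLinearMap.adjoint R z, (u : H)⟫_ℂ =
      ⟪ContinuousLinearMap.adjoint R z, B u⟫_ℂ := fun u => by
    rw [← sub_add_cancel (B u) (lam • (u : H)), inner_add_right,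
      ContinuousLinearMap.adjoint_inner_left, hR.left_inv u, inner_add_left, inner_smul_left,
      inner_smul_right, conj_conj]
  have hmem := mem_adjoint_domain_of_exists _ ⟨_, hR'⟩
  refine ⟨⟨_, hmem⟩, ?_⟩
  rw [shiftedToFun_apply, adjoint_apply_eq hB _ hR', add_sub_cancel_right]

variable {A B D : H →ₗ.[ℂ] H}

theorem isFormalAdjoint_blockOpL (hB : Dense (B.domain : Set H)) (hA : A.IsFormalAdjoint A)
    (hD : D.IsFormalAdjoint D) :
    (blockOpL A B B† D).IsFormalAdjoint (blockOpL A B B† D) := fun x y => by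
  simp only [WithLp.prod_inner_apply, WithLp.ofLp_fst, WithLp.ofLp_snd, blockOpL_apply_fst,
    blockOpL_apply_snd, inner_add_left, inner_add_right, hA _ ⟨y.1.fst, y.2.1.1⟩,
    hD _ ⟨y.1.snd, y.2.2.2⟩, adjoint_isFormalAdjoint hB _ ⟨y.1.snd, y.2.2.1⟩,
    (adjoint_isFormalAdjoint hB).symm _ ⟨y.1.fst, y.2.1.2⟩]
  ring

theorem adjoint_blockOpL_zero₁₁ (hB : Dense (B.domain : Set H)) (hD : D.IsFormalAdjoint D)
    (hBD : B.domain ≤ D.domain) {lam : ℂ} (hBlam : Function.Surjective (B.shiftedToFun lam))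
    (hBlam' : Function.Surjective (B†.shiftedToFun (conj lam))) :
    (blockOpL 0 B B† D)† = blockOpL 0 B B† D := by
  have hsurj : ∀ y, ∃ x : (blockOpL 0 B B† D).domain,
      blockOpL 0 B B† D x - offDiag lam x = y := by
    intro y
    obtain ⟨x₂, hx₂⟩ := hBlam y.fst
    obtain ⟨x₁, hx₁⟩ := hBlam' (y.snd - D ⟨x₂, hBD x₂.2⟩)
    refine ⟨⟨WithLp.toLp 2 ((x₁ : H), (x₂ : H)), ⟨trivial, x₁.2⟩, x₂.2, hBD x₂.2⟩,
      withLp_prod_ext ?_ ?_⟩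
    · simpa using hx₂
    · rw [shiftedToFun_apply] at hx₁
      simp only [WithLp.sub_snd, blockOpL_apply_snd, offDiag_apply_snd, WithLp.toLp_fst,
        WithLp.toLp_snd]
      rw [add_sub_right_comm, hx₁, sub_add_cancel]
  refine adjoint_eq_self_of_surjective_sub ?_ (offDiag lam) hsurj (by rwa [adjoint_offDiag])
  exact isFormalAdjoint_blockOpL hB (fun _ _ => by simp [LinearPMap.zero_apply]) hD

theorem adjoint_blockOpL_zero₂₂ (hB : Dense (B.domain : Set H)) (hA : A.IsFormalAdjoint A)
    (hBA : B†.domain ≤ A.domain) {lam : ℂ} (hBlam : Function.Surjective (B.shiftedToFun lam))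
    (hBlam' : Function.Surjective (B†.shiftedToFun (conj lam))) :
    (blockOpL A B B† 0)† = blockOpL A B B† 0 := by
  have hsurj : ∀ y, ∃ x : (blockOpL A B B† 0).domain,
      blockOpL A B B† 0 x - offDiag lam x = y := by
    intro y
    obtain ⟨x₁, hx₁⟩ := hBlam' y.snd
    obtain ⟨x₂, hx₂⟩ := hBlam (y.fst - A ⟨x₁, hBA x₁.2⟩)
    refine ⟨⟨WithLp.toLp 2 ((x₁ : H), (x₂ : H)), ⟨hBA x₁.2, x₁.2⟩, x₂.2, trivial⟩,
      withLp_prod_ext ?_ ?_⟩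
    · rw [shiftedToFun_apply] at hx₂
      simp only [WithLp.sub_fst, blockOpL_apply_fst, offDiag_apply_fst, WithLp.toLp_fst,
        WithLp.toLp_snd]
      rw [add_sub_assoc, hx₂, add_sub_cancel]
    · simpa [LinearPMap.zero_apply] using hx₁
  refine adjoint_eq_self_of_surjective_sub ?_ (offDiag lam) hsurj (by rwa [adjoint_offDiag])
  exact isFormalAdjoint_blockOpL hB hA (fun _ _ => by simp [LinearPMap.zero_apply])

theorem domain_blockOpL_eq_zero₁₁ (hBA : B†.domain ≤ A.domain) :
    (blockOpL A B B† D).domain = (blockOpL 0 B B† D).domain := by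
  ext x
  simp only [mem_blockOpL_domain, LinearPMap.zero_domain, Submodule.mem_top, true_and]
  exact ⟨fun h => ⟨h.1.2, h.2⟩, fun h => ⟨⟨hBA h.1, h.1⟩, h.2⟩⟩

theorem domain_blockOpL_eq_zero₂₂ (hBD : B.domain ≤ D.domain) :
    (blockOpL A B B† D).domain = (blockOpL A B B† 0).domain := by
  ext x
  simp only [mem_blockOpL_domain, LinearPMap.zero_domain, Submodule.mem_top, and_true]
  exact ⟨fun h => ⟨h.1, h.2.1⟩, fun h => ⟨h.1, h.2, hBD h.2⟩⟩

theorem exists_relBound_blockOpL_sub_zero₁₁ (hBA : B†.domain ≤ A.domain)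
    (hA : IsRelBoundedLe A B† 0) {C : ℝ} (hC : 0 ≤ C) (hD : RelBound D B C C) :
    ∃ a, 0 ≤ a ∧
      RelBound (blockOpL A B B† D - blockOpL 0 B B† D) (blockOpL 0 B B† D) a (1 / 2) := by
  set T₀ := blockOpL 0 B B† D
  set ε := 1 / (2 * (1 + C))
  have hε : ε * (1 + C) = 1 / 2 := by simp only [ε]; field_simp
  obtain ⟨a, ha, hAB⟩ := hA ε (by positivity)
  refine ⟨a + ε * C, by positivity,
    ⟨fun x hx => ⟨(domain_blockOpL_eq_zero₁₁ hBA).ge hx, hx⟩, fun x => ?_⟩⟩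
  have hdiff : ∀ hx, (blockOpL A B B† D - T₀) ⟨x, hx⟩ =
      WithLp.toLp 2 (A ⟨x.1.fst, hBA x.2.1.2⟩, 0) := fun _ =>
    withLp_prod_ext (by simp [T₀, LinearPMap.sub_apply, LinearPMap.zero_apply])
      (by simp [T₀, LinearPMap.sub_apply])
  have hBx₂ : ‖B ⟨x.1.snd, x.2.2.1⟩‖ ≤ ‖T₀ x‖ := by
    simpa [T₀, LinearPMap.zero_apply] using WithLp.norm_fst_le (x := T₀ x)
  have hB'x₁ :
      ‖B† ⟨x.1.fst, x.2.1.2⟩‖ ≤ ‖T₀ x‖ + ‖D ⟨x.1.snd, x.2.2.2⟩‖ := by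
    have h : B† ⟨x.1.fst, x.2.1.2⟩ = (T₀ x).snd - D ⟨x.1.snd, x.2.2.2⟩ := by simp [T₀]
    rw [h]
    exact (norm_sub_le _ _).trans (by gcongr; exact WithLp.norm_snd_le (x := T₀ x))
  have hDx₂ : ‖D ⟨x.1.snd, x.2.2.2⟩‖ ≤ C * ‖x.1‖ + C * ‖T₀ x‖ :=
    (hD.bound ⟨x.1.snd, x.2.2.1⟩).trans (by gcongr; exact WithLp.norm_snd_le (x := x.1))
  calc ‖(blockOpL A B B† D - T₀) ⟨x, _⟩‖ = ‖A ⟨x.1.fst, hBA x.2.1.2⟩‖ :=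
        (congrArg norm (hdiff _)).trans (WithLp.norm_toLp_fst 2 H H _)
    _ ≤ a * ‖x.1.fst‖ + ε * ‖B† ⟨x.1.fst, x.2.1.2⟩‖ := hAB.bound ⟨x.1.fst, x.2.1.2⟩
    _ ≤ a * ‖x.1‖ + ε * (‖T₀ x‖ + (C * ‖x.1‖ + C * ‖T₀ x‖)) := by
        gcongr
        · exact WithLp.norm_fst_le (x := x.1)
        · linarith
    _ = (a + ε * C) * ‖x.1‖ + ε * (1 + C) * ‖T₀ x‖ := by ring
    _ = _ := by rw [hε]

theorem exists_relBound_blockOpL_sub_zero₂₂ (hBD : B.domain ≤ D.domain)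
    (hD : IsRelBoundedLe D B 0) {C : ℝ} (hC : 0 ≤ C) (hA : RelBound A B† C C) :
    ∃ a, 0 ≤ a ∧
      RelBound (blockOpL A B B† D - blockOpL A B B† 0) (blockOpL A B B† 0) a (1 / 2) := by
  set T₀ := blockOpL A B B† 0
  set ε := 1 / (2 * (1 + C))
  have hε : ε * (1 + C) = 1 / 2 := by simp only [ε]; field_simp
  obtain ⟨a, ha, hDB⟩ := hD ε (by positivity)
  refine ⟨a + ε * C, by positivity,
    ⟨fun x hx => ⟨(domain_blockOpL_eq_zero₂₂ hBD).ge hx, hx⟩, fun x => ?_⟩⟩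
  have hdiff : ∀ hx, (blockOpL A B B† D - T₀) ⟨x, hx⟩ =
      WithLp.toLp 2 (0, D ⟨x.1.snd, hBD x.2.2.1⟩) := fun _ =>
    withLp_prod_ext (by simp [T₀, LinearPMap.sub_apply])
      (by simp [T₀, LinearPMap.sub_apply, LinearPMap.zero_apply])
  have hB'x₁ : ‖B† ⟨x.1.fst, x.2.1.2⟩‖ ≤ ‖T₀ x‖ := by
    simpa [T₀, LinearPMap.zero_apply] using WithLp.norm_snd_le (x := T₀ x)
  have hBx₂ : ‖B ⟨x.1.snd, x.2.2.1⟩‖ ≤ ‖T₀ x‖ + ‖A ⟨x.1.fst, x.2.1.1⟩‖ := by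
    have h : B ⟨x.1.snd, x.2.2.1⟩ = (T₀ x).fst - A ⟨x.1.fst, x.2.1.1⟩ := by simp [T₀]
    rw [h]
    exact (norm_sub_le _ _).trans (by gcongr; exact WithLp.norm_fst_le (x := T₀ x))
  have hAx₁ : ‖A ⟨x.1.fst, x.2.1.1⟩‖ ≤ C * ‖x.1‖ + C * ‖T₀ x‖ :=
    (hA.bound ⟨x.1.fst, x.2.1.2⟩).trans (by gcongr; exact WithLp.norm_fst_le (x := x.1))
  calc ‖(blockOpL A B B† D - T₀) ⟨x, _⟩‖ = ‖D ⟨x.1.snd, hBD x.2.2.1⟩‖ :=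
        (congrArg norm (hdiff _)).trans (WithLp.norm_toLp_snd 2 H H _)
    _ ≤ a * ‖x.1.snd‖ + ε * ‖B ⟨x.1.snd, x.2.2.1⟩‖ := hDB.bound ⟨x.1.snd, x.2.2.1⟩
    _ ≤ a * ‖x.1‖ + ε * (‖T₀ x‖ + (C * ‖x.1‖ + C * ‖T₀ x‖)) := by
        gcongr
        · exact WithLp.norm_snd_le (x := x.1)
        · linarith
    _ = (a + ε * C) * ‖x.1‖ + ε * (1 + C) * ‖T₀ x‖ := by ring
    _ = _ := by rw [hε]

end BlockOp

namespace BlockOp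

theorem statement19_general {H : Type*} [NormedAddCommGroup H] [InnerProductSpace ℂ H] [CompleteSpace H]
    (A B D : H →ₗ.[ℂ] H)
    (hAd : Dense (A.domain : Set H)) (hBd : Dense (B.domain : Set H))
    (hDd : Dense (D.domain : Set H))
    (hAc : A.IsClosable)
    (hDc : D.IsClosable)
    (hAsym : A ≤ A.adjoint) (hDsym : D ≤ D.adjoint)
    (hBclosed : B.IsClosed) (hres : (resolventSet B).Nonempty)
    (hBA : B.adjoint.domain ≤ A.domain) (hBD : B.domain ≤ D.domain)
    (h : IsRelBoundedLe A B.adjoint 0 ∨ IsRelBoundedLe D B 0) :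
    IsSelfAdjoint (blockOpL A B B.adjoint D) := by
  obtain ⟨lam, R, hR⟩ := hres
  have hA := isFormalAdjoint_self_of_le_adjoint hAd hAsym
  have hD := isFormalAdjoint_self_of_le_adjoint hDd hDsym
  have hS := isFormalAdjoint_blockOpL hBd hA hD
  rw [isSelfAdjoint_def]
  rcases h with hAB | hDB
  · obtain ⟨C, hC, hDB⟩ := exists_relBound_of_isClosed hBclosed hDc hBD
    obtain ⟨a, ha, hbound⟩ := exists_relBound_blockOpL_sub_zero₁₁ hBA hAB hC hDB
    exact adjoint_eq_self_of_relBound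
      (adjoint_blockOpL_zero₁₁ hBd hD hBD hR.surjective_shiftedToFun
        (hR.surjective_adjoint_shiftedToFun hBd))
      hS (domain_blockOpL_eq_zero₁₁ hBA) ha (by norm_num) (by norm_num) hbound
  · obtain ⟨C, hC, hAB⟩ := exists_relBound_of_isClosed (adjoint_isClosed hBd) hAc hBA
    obtain ⟨a, ha, hbound⟩ := exists_relBound_blockOpL_sub_zero₂₂ hBD hDB hC hAB
    exact adjoint_eq_self_of_relBound
      (adjoint_blockOpL_zero₂₂ hBd hA hBA hR.surjective_shiftedToFun
        (hR.surjective_adjoint_shiftedToFun hBd))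
      hS (domain_blockOpL_eq_zero₂₂ hBD) ha (by norm_num) (by norm_num) hbound

theorem statement19 {H : Type*} [NormedAddCommGroup H] [InnerProductSpace ℂ H] [CompleteSpace H]
    (A B D : H →ₗ.[ℂ] H)
    (hAd : Dense (A.domain : Set H)) (hBd : Dense (B.domain : Set H))
    (hBad : Dense (B.adjoint.domain : Set H)) (hDd : Dense (D.domain : Set H))
    (hAc : A.IsClosable) (hBc : B.IsClosable) (hBac : B.adjoint.IsClosable)
    (hDc : D.IsClosable)
    (hAsym : A ≤ A.adjoint) (hBsym : B ≤ B.adjoint.adjoint) (hDsym : D ≤ D.adjoint)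
    (hdense : Dense ((blockOpL A B B.adjoint D).domain : Set (WithLp 2 (H × H))))
    (hBclosed : B.IsClosed) (hres : (resolventSet B).Nonempty)
    (hBA : B.adjoint.domain ≤ A.domain) (hBD : B.domain ≤ D.domain)
    (h : IsRelBoundedLe A B.adjoint 0 ∨ IsRelBoundedLe D B 0) :
    IsSelfAdjoint (blockOpL A B B.adjoint D) :=
  statement19_general A B D hAd hBd hDd hAc hDc hAsym hDsym hBclosed hres hBA hBD h

end BlockOp
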